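/- arXiv:2305.11158 — 2 statements merged into one kernel-verified Lean document; each statement's English description precedes it below -/
import Mathlib

section
/- Let V be a braided rigid monoidal category with braiding σ, Drinfeld morphism ν_M = (id_{M∨∨} ⊗ ev^r_M) ∘ (id_{M∨∨} ⊗ σ_{M∨,M}) ∘ (coev^r_{M∨} ⊗ id_M), and its inverse ν̄. Define ν^!_X : X∨∨ → X and ν̄^!_X : X → X∨∨ as the left dual morphisms ᵛ(ν_{X∨}) and ᵛ(ν̄_{X∨}) transported along the canonical identifications ᵛ(X∨) ≅ X, and set κ_X := ν_{X∨∨} ∘ ν̄^!_X : X → X∨∨∨∨ and γ_X := ν^!_X ∘ ν_X : X → X. Let θ be a balanced structure on V and φ := ν ∘ θ the corresponding pivotal structure. Then the following are equivalent: (i) θ is a ribbon structure (θ_{X∨} = (θ_X)∨ for all X); (ii) φ_{X∨∨} ∘ φ_X = κ_X for all X; (iii) γ_X ∘ θ_X ∘ θ_X = id_X for all X. -/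
open CategoryTheory Category MonoidalCategory

universe v u

variable {V : Type u} [Category.{v} V] [MonoidalCategory V] [BraidedCategory V] [RigidCategory V]

/-- The chosen right dual `X∨` (in the paper's conventions) of an object `X`, i.e. the chosen
left dual `ᘁX` in Mathlib's conventions, with evaluation `ev^r_X = ε : X ⊗ X∨ ⟶ 𝟙` and
coevaluation `coev^r_X = η : 𝟙 ⟶ X∨ ⊗ X`. -/
noncomputable def LD (X : V) : V :=
  @HasLeftDual.leftDual V _ _ X (LeftRigidCategory.leftDual X)

noncomputable instance pairingLD (X : V) : ExactPairing (LD X) X :=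
  @HasLeftDual.exact V _ _ X (LeftRigidCategory.leftDual X)

/-- The dual morphism `f∨ : Y∨ ⟶ X∨` of `f : X ⟶ Y`. -/
noncomputable def ldMate {X Y : V} (f : X ⟶ Y) : LD Y ⟶ LD X :=
  (λ_ (LD Y)).inv ≫ (η_ (LD X) X ▷ LD Y) ≫ (((LD X) ◁ f) ▷ LD Y) ≫
    (α_ (LD X) Y (LD Y)).hom ≫ ((LD X) ◁ ε_ (LD Y) Y) ≫ (ρ_ (LD X)).hom

/-- The dual morphism `ᵛg : ᵛ(LD B) ⟶ ᵛ(LD A)` of a morphism `g : LD A ⟶ LD B`, written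
using the canonical identifications `ᵛ(X∨) = X` (an object `A` is the left dual of its
chosen right dual `LD A` via the same pairing). -/
noncomputable def vMate {A B : V} (g : LD A ⟶ LD B) : B ⟶ A :=
  (ρ_ B).inv ≫ (B ◁ η_ (LD A) A) ≫ (B ◁ (g ▷ A)) ≫ (α_ B (LD B) A).inv ≫
    (ε_ (LD B) B ▷ A) ≫ (λ_ A).hom

/-- The Drinfeld morphism `ν_M : M ⟶ M∨∨`, given by
`(id ⊗ ev^r_M) ∘ (id ⊗ σ_{M∨,M}) ∘ (coev^r_{M∨} ⊗ id_M)`. -/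
noncomputable def drinfeldNu (M : V) : M ⟶ LD (LD M) :=
  (λ_ M).inv ≫ (η_ (LD (LD M)) (LD M) ▷ M) ≫ (α_ (LD (LD M)) (LD M) M).hom ≫
    ((LD (LD M)) ◁ (β_ (LD M) M).hom) ≫ ((LD (LD M)) ◁ ε_ (LD M) M) ≫ (ρ_ (LD (LD M))).hom

/-- The inverse `ν̄_M : M∨∨ ⟶ M` of the Drinfeld morphism, given by
`(ev^r_{M∨} ⊗ id_M) ∘ (σ_{M∨,M∨∨}⁻¹ ⊗ id_M) ∘ (id_{M∨∨} ⊗ coev^r_M)`. -/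
noncomputable def drinfeldNuBar (M : V) : LD (LD M) ⟶ M :=
  (ρ_ (LD (LD M))).inv ≫ ((LD (LD M)) ◁ η_ (LD M) M) ≫ (α_ (LD (LD M)) (LD M) M).inv ≫
    ((β_ (LD M) (LD (LD M))).inv ▷ M) ≫ (ε_ (LD (LD M)) (LD M) ▷ M) ≫ (λ_ M).hom

/-- `ν^!_X : X∨∨ ⟶ X`, the conjugate of the Drinfeld morphism by duality:
the left dual morphism `ᵛ(ν_{X∨})` transported along the canonical identifications. -/
noncomputable def drinfeldNuBang (X : V) : LD (LD X) ⟶ X :=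
  vMate (drinfeldNu (LD X))

/-- `ν̄^!_X : X ⟶ X∨∨`, the conjugate of `ν̄` by duality:
the left dual morphism `ᵛ(ν̄_{X∨})` transported along the canonical identifications. -/
noncomputable def drinfeldNuBarBang (X : V) : X ⟶ LD (LD X) :=
  vMate (drinfeldNuBar (LD X))

/-- `κ_X := ν_{X∨∨} ∘ ν̄^!_X : X ⟶ X∨∨∨∨`. -/
noncomputable def kappa (X : V) : X ⟶ LD (LD (LD (LD X))) :=
  drinfeldNuBarBang X ≫ drinfeldNu (LD (LD X))

/-- `γ_X := ν^!_X ∘ ν_X : X ⟶ X`. -/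
noncomputable def gamma (X : V) : X ⟶ X :=
  drinfeldNu X ≫ drinfeldNuBang X

/-- A balanced structure (twist) on `V`: a natural endomorphism `θ` of the identity functor
with `θ_{X⊗Y} = (θ_X ⊗ θ_Y) ∘ σ_{Y,X} ∘ σ_{X,Y}` and `θ_𝟙 = id_𝟙`. -/
def IsBalanced (θ : ∀ X : V, X ⟶ X) : Prop :=
  (∀ {X Y : V} (f : X ⟶ Y), f ≫ θ Y = θ X ≫ f) ∧
  (∀ X Y : V, θ (X ⊗ Y) = (β_ X Y).hom ≫ (β_ Y X).hom ≫ (θ X ⊗ₘ θ Y)) ∧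
  θ (𝟙_ V) = 𝟙 (𝟙_ V)

/-!
The Drinfeld morphism `ν_M` is the comparison isomorphism between two left duals of `M∨`: the
chosen one `M∨∨`, and `M` paired with `M∨` through the braiding. Likewise `ν^!_M` compares two
right duals of `M∨`. Comparing coevaluations then shows that `γ_M = ν^!_M ∘ ν_M` is the
endomorphism with `(id ⊗ γ_M) ∘ coev_M = σ_{M,M∨} ∘ σ_{M∨,M} ∘ coev_M`.
Since `θ` fixes `coev_M`, the balancing axiom for `θ_{M∨ ⊗ M}` gives
`ᵛ(θ_{M∨}) ∘ γ_M ∘ θ_M = id`; as `θ_M` commutes with `γ_M`, this turns (i) into (iii).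
Condition (ii) reads `ν_{M∨∨} ∘ ν_M ∘ θ_M² = ν_{M∨∨} ∘ (ν^!_M)⁻¹`, which is (iii) after
cancelling the isomorphisms.
-/

open BraidedCategory

section ExactPairing

variable {C : Type*} [Category C] [MonoidalCategory C]

lemma coevaluation_comp_whiskerLeft_inj {X Y Z : C} [ExactPairing X Y] {f g : Y ⟶ Z} :
    η_ X Y ≫ X ◁ f = η_ X Y ≫ X ◁ g ↔ f = g := by
  refine ⟨fun h => ?_, fun h => h ▸ rfl⟩
  have := congrArg (tensorLeftHomEquiv (𝟙_ C) X Y Z).symm h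
  simp only [tensorLeftHomEquiv_symm_coevaluation_comp_whiskerLeft] at this
  exact (cancel_epi (ρ_ Y).hom).mp this

lemma coevaluation_comp_whiskerRight_inj {X Y Z : C} [ExactPairing X Y] {f g : X ⟶ Z} :
    η_ X Y ≫ f ▷ Y = η_ X Y ≫ g ▷ Y ↔ f = g := by
  refine ⟨fun h => ?_, fun h => h ▸ rfl⟩
  have := congrArg (tensorRightHomEquiv (𝟙_ C) X Y Z).symm h
  simp only [tensorRightHomEquiv_symm_coevaluation_comp_whiskerRight] at this
  exact (cancel_epi (λ_ X).hom).mp this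

lemma whiskerLeft_leftDualIso_hom_comp_evaluation {X₁ X₂ Y : C} (p₁ : ExactPairing X₁ Y)
    (p₂ : ExactPairing X₂ Y) :
    Y ◁ (leftDualIso p₁ p₂).hom ≫ ε_ X₂ Y = ε_ X₁ Y :=
  (@leftAdjointMate_comp_evaluation C _ _ Y Y ⟨X₂⟩ ⟨X₁⟩ (𝟙 Y)).trans (by simp)

lemma coevaluation_comp_leftDualIso_hom_whiskerRight {X₁ X₂ Y : C} (p₁ : ExactPairing X₁ Y)
    (p₂ : ExactPairing X₂ Y) :
    η_ X₁ Y ≫ (leftDualIso p₁ p₂).hom ▷ Y = η_ X₂ Y :=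
  (@coevaluation_comp_leftAdjointMate C _ _ Y Y ⟨X₂⟩ ⟨X₁⟩ (𝟙 Y)).trans (by simp)

lemma coevaluation_comp_whiskerLeft_rightDualIso_hom {X Y₁ Y₂ : C} (p₁ : ExactPairing X Y₁)
    (p₂ : ExactPairing X Y₂) :
    η_ X Y₁ ≫ X ◁ (rightDualIso p₁ p₂).hom = η_ X Y₂ :=
  (@coevaluation_comp_rightAdjointMate C _ _ X X ⟨Y₂⟩ ⟨Y₁⟩ (𝟙 X)).trans (by simp)

variable [BraidedCategory C] (X Y : C) [ExactPairing X Y]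

lemma evaluation_exactPairing_swap :
    @ExactPairing.evaluation C _ _ Y X (exactPairing_swap X Y) = (β_ X Y).hom ≫ ε_ X Y := rfl

lemma coevaluation_exactPairing_swap :
    @ExactPairing.coevaluation C _ _ Y X (exactPairing_swap X Y) = η_ X Y ≫ (β_ Y X).inv := rfl

end ExactPairing

section Mates

variable {C : Type*} [Category C] [MonoidalCategory C] [RigidCategory C]

lemma coevaluation_comp_ldMate {X Y : C} (f : X ⟶ Y) :
    η_ (LD Y) Y ≫ ldMate f ▷ Y = η_ (LD X) X ≫ LD X ◁ f :=
  @coevaluation_comp_leftAdjointMate C _ _ X Y ⟨LD X⟩ ⟨LD Y⟩ f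

lemma coevaluation_comp_vMate {A B : C} (g : LD A ⟶ LD B) :
    η_ (LD B) B ≫ LD B ◁ vMate g = η_ (LD A) A ≫ g ▷ A :=
  @coevaluation_comp_rightAdjointMate C _ _ (LD A) (LD B) ⟨A⟩ ⟨B⟩ g

lemma vMate_id (A : C) : vMate (𝟙 (LD A)) = 𝟙 A :=
  @rightAdjointMate_id C _ _ (LD A) ⟨A⟩

lemma vMate_comp {A B D : C} (g : LD A ⟶ LD B) (h : LD B ⟶ LD D) :
    vMate (g ≫ h) = vMate h ≫ vMate g :=
  @comp_rightAdjointMate C _ _ (LD A) (LD B) (LD D) ⟨A⟩ ⟨B⟩ ⟨D⟩ g h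

lemma vMate_ldMate {X Y : C} (f : X ⟶ Y) : vMate (ldMate f) = f := by
  rw [← coevaluation_comp_whiskerLeft_inj (X := LD X), coevaluation_comp_vMate,
    coevaluation_comp_ldMate]

lemma ldMate_vMate {A B : C} (g : LD A ⟶ LD B) : ldMate (vMate g) = g := by
  rw [← coevaluation_comp_whiskerRight_inj (Y := A), coevaluation_comp_ldMate,
    coevaluation_comp_vMate]

lemma eq_ldMate_iff_vMate_eq {X Y : C} (g : LD Y ⟶ LD X) (f : X ⟶ Y) :
    g = ldMate f ↔ vMate g = f :=
  ⟨fun h => h ▸ vMate_ldMate f, fun h => h ▸ (ldMate_vMate g).symm⟩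

end Mates

lemma drinfeldNu_eq_leftDualIso (M : V) :
    drinfeldNu M = (leftDualIso (exactPairing_swap (LD M) M) (pairingLD (LD M))).hom := by
  simp [drinfeldNu, leftDualIso, leftAdjointMate, evaluation_exactPairing_swap]

instance isIso_drinfeldNu (M : V) : IsIso (drinfeldNu M) := by
  rw [drinfeldNu_eq_leftDualIso]
  infer_instance

lemma whiskerLeft_drinfeldNu_comp_evaluation (M : V) :
    LD M ◁ drinfeldNu M ≫ ε_ (LD (LD M)) (LD M) = (β_ (LD M) M).hom ≫ ε_ (LD M) M := by
  rw [drinfeldNu_eq_leftDualIso, whiskerLeft_leftDualIso_hom_comp_evaluation,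
    evaluation_exactPairing_swap]

lemma coevaluation_comp_whiskerLeft_drinfeldNu (M : V) :
    η_ (LD M) M ≫ LD M ◁ drinfeldNu M =
      η_ (LD (LD M)) (LD M) ≫ (β_ (LD (LD M)) (LD M)).hom := by
  have h := coevaluation_comp_leftDualIso_hom_whiskerRight (exactPairing_swap (LD M) M)
    (pairingLD (LD M))
  rw [← drinfeldNu_eq_leftDualIso, coevaluation_exactPairing_swap, assoc,
    ← braiding_inv_naturality_right] at h
  rw [← h]
  simp

lemma drinfeldNu_comp_drinfeldNuBar (M : V) : drinfeldNu M ≫ drinfeldNuBar M = 𝟙 M := by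
  have h : drinfeldNu M ▷ LD M ≫ (β_ (LD M) (LD (LD M))).inv ≫ ε_ (LD (LD M)) (LD M) =
      ε_ (LD M) M := by
    rw [braiding_inv_naturality_left_assoc, whiskerLeft_drinfeldNu_comp_evaluation,
      Iso.inv_hom_id_assoc]
  calc drinfeldNu M ≫ drinfeldNuBar M
      = 𝟙 _ ⊗≫ (drinfeldNu M ▷ 𝟙_ V ≫ LD (LD M) ◁ η_ (LD M) M) ⊗≫
          ((β_ (LD M) (LD (LD M))).inv ≫ ε_ (LD (LD M)) (LD M)) ▷ M ⊗≫ 𝟙 _ := by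
        simp only [drinfeldNuBar]; monoidal
    _ = 𝟙 _ ⊗≫ (M ◁ η_ (LD M) M ⊗≫
          (drinfeldNu M ▷ LD M ≫ (β_ (LD M) (LD (LD M))).inv ≫ ε_ (LD (LD M)) (LD M)) ▷ M) ⊗≫
          𝟙 _ := by
        rw [← whisker_exchange]; monoidal
    _ = 𝟙 M := by rw [h, ExactPairing.coevaluation_evaluation'']; monoidal

lemma drinfeldNuBar_eq_inv (M : V) : drinfeldNuBar M = inv (drinfeldNu M) :=
  (IsIso.inv_eq_of_hom_inv_id (drinfeldNu_comp_drinfeldNuBar M)).symm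

lemma drinfeldNuBang_eq_rightDualIso (M : V) :
    drinfeldNuBang M =
      (rightDualIso (exactPairing_swap (LD (LD M)) (LD M)) (pairingLD M)).hom := by
  simp only [drinfeldNuBang, vMate, rightDualIso, rightAdjointMate]
  rw [associator_inv_naturality_middle_assoc, ← comp_whiskerRight_assoc,
    whiskerLeft_drinfeldNu_comp_evaluation]
  simp [evaluation_exactPairing_swap]

lemma coevaluation_comp_whiskerLeft_drinfeldNuBang (M : V) :
    η_ (LD (LD M)) (LD M) ≫ (β_ (LD M) (LD (LD M))).inv ≫ LD M ◁ drinfeldNuBang M =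
      η_ (LD M) M := by
  rw [drinfeldNuBang_eq_rightDualIso, ← assoc, ← coevaluation_exactPairing_swap,
    coevaluation_comp_whiskerLeft_rightDualIso_hom]

lemma coevaluation_comp_whiskerLeft_gamma (M : V) :
    η_ (LD M) M ≫ LD M ◁ gamma M =
      η_ (LD M) M ≫ (β_ (LD M) M).hom ≫ (β_ M (LD M)).hom := by
  conv_rhs => rw [← coevaluation_comp_whiskerLeft_drinfeldNuBang]
  rw [gamma, MonoidalCategory.whiskerLeft_comp,
    reassoc_of% coevaluation_comp_whiskerLeft_drinfeldNu]
  simp [braiding_naturality_right_assoc, braiding_naturality_left]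

noncomputable def drinfeldNuBangIso (M : V) : LD (LD M) ≅ M where
  hom := drinfeldNuBang M
  inv := drinfeldNuBarBang M
  hom_inv_id := by
    rw [drinfeldNuBang, drinfeldNuBarBang, ← vMate_comp, drinfeldNuBar_eq_inv,
      IsIso.inv_hom_id, vMate_id]
  inv_hom_id := by
    rw [drinfeldNuBang, drinfeldNuBarBang, ← vMate_comp, drinfeldNuBar_eq_inv,
      IsIso.hom_inv_id, vMate_id]

namespace IsBalanced

variable {θ : ∀ X : V, X ⟶ X}

lemma vMate_twist_comp_gamma_comp_twist (hθ : IsBalanced θ) (X : V) :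
    vMate (θ (LD X)) ≫ gamma X ≫ θ X = 𝟙 X := by
  rw [← coevaluation_comp_whiskerLeft_inj (X := LD X)]
  calc η_ (LD X) X ≫ LD X ◁ (vMate (θ (LD X)) ≫ gamma X ≫ θ X)
      = (η_ (LD X) X ≫ LD X ◁ gamma X) ≫ (θ (LD X) ⊗ₘ θ X) := by
        rw [MonoidalCategory.whiskerLeft_comp, MonoidalCategory.whiskerLeft_comp,
          reassoc_of% coevaluation_comp_vMate, ← whisker_exchange_assoc,
          MonoidalCategory.tensorHom_def, assoc]
    _ = η_ (LD X) X ≫ θ (LD X ⊗ X) := by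
        rw [coevaluation_comp_whiskerLeft_gamma, hθ.2.1]; simp only [assoc]
    _ = η_ (LD X) X ≫ LD X ◁ 𝟙 X := by
        rw [hθ.1, hθ.2.2]; simp

lemma vMate_twist_eq_iff (hθ : IsBalanced θ) (X : V) :
    vMate (θ (LD X)) = θ X ↔ θ X ≫ θ X ≫ gamma X = 𝟙 X := by
  have h := hθ.vMate_twist_comp_gamma_comp_twist X
  have hγ : gamma X ≫ θ X = θ X ≫ gamma X := hθ.1 (gamma X)
  refine ⟨fun hv => by rwa [hv, hγ] at h, fun h' => ?_⟩
  calc vMate (θ (LD X)) = vMate (θ (LD X)) ≫ gamma X ≫ θ X ≫ θ X := by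
        rw [reassoc_of% hγ, hγ, h', comp_id]
    _ = θ X := by rw [reassoc_of% h]

lemma ribbon_iff (hθ : IsBalanced θ) (X : V) :
    θ (LD X) = ldMate (θ X) ↔ θ X ≫ θ X ≫ gamma X = 𝟙 X :=
  (eq_ldMate_iff_vMate_eq _ _).trans (hθ.vMate_twist_eq_iff X)

lemma pivotal_comp_pivotal_eq_kappa_iff (hθ : IsBalanced θ) {φ : ∀ X : V, X ⟶ LD (LD X)}
    (hφ : ∀ X, φ X = θ X ≫ drinfeldNu X) (X : V) :
    φ X ≫ φ (LD (LD X)) = kappa X ↔ θ X ≫ θ X ≫ gamma X = 𝟙 X :=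
  calc _ ↔ (θ X ≫ θ X ≫ drinfeldNu X) ≫ drinfeldNu (LD (LD X)) =
        drinfeldNuBarBang X ≫ drinfeldNu (LD (LD X)) := by
        rw [hφ, hφ, assoc, reassoc_of% hθ.1 (drinfeldNu X), kappa]; simp only [assoc]
    _ ↔ θ X ≫ θ X ≫ drinfeldNu X = (drinfeldNuBangIso X).inv := cancel_mono _
    _ ↔ (θ X ≫ θ X ≫ drinfeldNu X) ≫ (drinfeldNuBangIso X).hom = 𝟙 X :=
        (Iso.comp_hom_eq_id _).symm
    _ ↔ θ X ≫ θ X ≫ gamma X = 𝟙 X := by simp [drinfeldNuBangIso, gamma]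

end IsBalanced

/-- Let `θ` be a balanced structure on `V` and let `φ := ν ∘ θ` be the corresponding pivotal
structure.  The following are equivalent: (i) `θ` is a ribbon structure, i.e.
`θ_{X∨} = (θ_X)∨` for all `X`; (ii) `φ_{X∨∨} ∘ φ_X = κ_X` for all `X`;
(iii) `γ_X ∘ θ_X ∘ θ_X = id_X` for all `X`. -/
theorem ribbon_iff_kappa_iff_gamma
    (θ : ∀ X : V, X ⟶ X) (hθ : IsBalanced θ)
    (φ : ∀ X : V, X ⟶ LD (LD X)) (hφ : ∀ X, φ X = θ X ≫ drinfeldNu X) :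
    ((∀ X : V, θ (LD X) = ldMate (θ X)) ↔
      (∀ X : V, φ X ≫ φ (LD (LD X)) = kappa X)) ∧
    ((∀ X : V, θ (LD X) = ldMate (θ X)) ↔
      (∀ X : V, θ X ≫ θ X ≫ gamma X = 𝟙 X)) :=
  ⟨forall_congr' fun X =>
      (hθ.ribbon_iff X).trans (hθ.pivotal_comp_pivotal_eq_kappa_iff hφ X).symm,
    forall_congr' hθ.ribbon_iff⟩
end

section
/- Let V be a monoidal category and H = (H, m, u) an algebra in V. The set Nat(𝟭_V, 𝟭_V ⊗ H) of natural transformations {h_X : X → X ⊗ H}, equipped with the convolution product (h ∗ k)_X := (id_X ⊗ m) ∘ (k_X ⊗ id_H) ∘ h_X and unit element X ↦ id_X ⊗ u, is a monoid; moreover, the map h ↦ h^♯, where h^♯_{(M,r)} := r ∘ h_M : M → M, is an isomorphism of monoids from (Nat(𝟭_V, 𝟭_V ⊗ H), ∗) onto the monoid End(U_H) of natural endomorphisms of the forgetful functor U_H : V_H → V under composition, with inverse f ↦ f^♭ given by f^♭_X := f_{(X⊗H, id_X⊗m)} ∘ (id_X ⊗ u). -/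
open CategoryTheory Category MonoidalCategory

universe v u

variable (V : Type u) [Category.{v} V] [MonoidalCategory V]

/-- An algebra (monoid object) `H = (H, m, u)` in a monoidal category `V`. -/
structure AlgebraObject where
  X : V
  mul : X ⊗ X ⟶ X
  one : 𝟙_ V ⟶ X
  one_mul : (one ▷ X) ≫ mul = (λ_ X).hom
  mul_one : (X ◁ one) ≫ mul = (ρ_ X).hom
  mul_assoc : (mul ▷ X) ≫ mul = (α_ X X X).hom ≫ (X ◁ mul) ≫ mul

variable {V}

/-- A right module `(M, r)` over an algebra `A` in `V`. -/
structure RightModule (A : AlgebraObject V) where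
  M : V
  act : M ⊗ A.X ⟶ M
  act_act : (act ▷ A.X) ≫ act = (α_ M A.X A.X).hom ≫ (M ◁ A.mul) ≫ act
  act_one : (M ◁ A.one) ≫ act = (ρ_ M).hom

/-- A morphism of underlying objects `u : M.M ⟶ N.M` is a morphism of right `A`-modules if it
commutes with the actions. -/
def IsModuleHom {A : AlgebraObject V} (M N : RightModule A) (u : M.M ⟶ N.M) : Prop :=
  M.act ≫ u = (u ▷ A.X) ≫ N.act

/-- The free right `A`-module `(X ⊗ H, id_X ⊗ m)` on an object `X`. -/
noncomputable def freeModule (A : AlgebraObject V) (X : V) : RightModule A where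
  M := X ⊗ A.X
  act := (α_ X A.X A.X).hom ≫ (X ◁ A.mul)
  act_act := by
    rw [comp_whiskerRight, Category.assoc, associator_naturality_middle_assoc,
      ← MonoidalCategory.whiskerLeft_comp, A.mul_assoc, associator_naturality_right_assoc,
      ← MonoidalCategory.whiskerLeft_comp]
    simp only [MonoidalCategory.whiskerLeft_comp]
    rw [pentagon_assoc]
  act_one := by
    rw [associator_naturality_right_assoc, ← MonoidalCategory.whiskerLeft_comp, A.mul_one]
    monoidal

variable (A : AlgebraObject V)

/-- Naturality of a family `h_X : X ⟶ X ⊗ H`, i.e. `h ∈ Nat(𝟭_V, 𝟭_V ⊗ H)`. -/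
def IsNatToTensor (h : ∀ X : V, X ⟶ X ⊗ A.X) : Prop :=
  ∀ {X Y : V} (u : X ⟶ Y), u ≫ h Y = h X ≫ (u ▷ A.X)

/-- Naturality of a family `f_M : M ⟶ M` indexed by right `A`-modules, i.e.
`f ∈ End(U_H)` where `U_H : V_H ⥤ V` is the forgetful functor. -/
def IsNatEndOnModules (f : ∀ M : RightModule A, M.M ⟶ M.M) : Prop :=
  ∀ {M N : RightModule A} (u : M.M ⟶ N.M), IsModuleHom M N u → u ≫ f N = f M ≫ u

/-- The convolution product `(h ∗ k)_X := (id_X ⊗ m) ∘ (k_X ⊗ id_H) ∘ h_X` on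
`Nat(𝟭_V, 𝟭_V ⊗ H)`. -/
noncomputable def conv (h k : ∀ X : V, X ⟶ X ⊗ A.X) : ∀ X : V, X ⟶ X ⊗ A.X :=
  fun X => h X ≫ (k X ▷ A.X) ≫ (α_ X A.X A.X).hom ≫ (X ◁ A.mul)

/-- The unit `X ↦ id_X ⊗ u` for the convolution product. -/
noncomputable def convUnit : ∀ X : V, X ⟶ X ⊗ A.X :=
  fun X => (ρ_ X).inv ≫ (X ◁ A.one)

/-- `h ↦ h^♯`, `h^♯_{(M,r)} := r ∘ h_M`. -/
noncomputable def sharpFam (h : ∀ X : V, X ⟶ X ⊗ A.X) (M : RightModule A) : M.M ⟶ M.M :=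
  h M.M ≫ M.act

/-- `f ↦ f^♭`, `f^♭_X := f_{(X⊗H, id_X⊗m)} ∘ (id_X ⊗ u)`. -/
noncomputable def flatFam (f : ∀ M : RightModule A, M.M ⟶ M.M) (X : V) : X ⟶ X ⊗ A.X :=
  (ρ_ X).inv ≫ (X ◁ A.one) ≫ f (freeModule A X)

/-! `f ↦ f^♭` is a left inverse of `h ↦ h^♯` on natural families (naturality of `h` along
`id_X ⊗ u : X ⟶ X ⊗ H` and the unit law of `H`), so `(−)^♯` is injective there. By naturality
of `h` along the plain morphism `k^♯_M` and associativity of the action, `(h ∗ k)^♯ = h^♯ ∘ k^♯`.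
Hence the monoid laws for `∗` are pulled back from those of composition in `End(U_H)`. -/

section

variable {A}

lemma isNatToTensor_conv {h k : ∀ X : V, X ⟶ X ⊗ A.X} (hh : IsNatToTensor A h)
    (hk : IsNatToTensor A k) : IsNatToTensor A (conv A h k) := by
  intro X Y u
  simp only [conv]
  rw [← assoc, hh u, assoc, ← comp_whiskerRight_assoc, hk u, comp_whiskerRight_assoc,
    associator_naturality_left_assoc, ← whisker_exchange]
  simp

variable (A) in
lemma isNatToTensor_convUnit : IsNatToTensor A (convUnit A) := by
  intro X Y u
  simp only [convUnit, assoc]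
  rw [rightUnitor_inv_naturality_assoc, ← whisker_exchange]

lemma isNatEndOnModules_sharpFam {h : ∀ X : V, X ⟶ X ⊗ A.X} (hh : IsNatToTensor A h) :
    IsNatEndOnModules A (sharpFam A h) := by
  intro M N u hu
  simp only [sharpFam]
  rw [reassoc_of% hh u, ← hu, assoc]

lemma isModuleHom_act (M : RightModule A) : IsModuleHom (freeModule A M.M) M M.act := by
  simp only [IsModuleHom, freeModule, assoc, M.act_act]

lemma isModuleHom_whiskerRight {X Y : V} (u : X ⟶ Y) :
    IsModuleHom (freeModule A X) (freeModule A Y) (u ▷ A.X) := by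
  simp only [IsModuleHom, freeModule]
  rw [associator_naturality_left_assoc, ← whisker_exchange]
  simp

lemma convUnit_whiskerRight_comp_mul (X : V) :
    (convUnit A X ▷ A.X) ≫ (α_ X A.X A.X).hom ≫ (X ◁ A.mul) = 𝟙 (X ⊗ A.X) := by
  simp only [convUnit]
  rw [comp_whiskerRight, assoc, associator_naturality_middle_assoc,
    ← MonoidalCategory.whiskerLeft_comp, A.one_mul]
  monoidal

lemma sharpFam_convUnit (M : RightModule A) : sharpFam A (convUnit A) M = 𝟙 M.M := by
  simp only [sharpFam, convUnit, assoc, M.act_one, Iso.inv_hom_id]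

lemma sharpFam_conv {h k : ∀ X : V, X ⟶ X ⊗ A.X} (hh : IsNatToTensor A h)
    (M : RightModule A) : sharpFam A (conv A h k) M = sharpFam A k M ≫ sharpFam A h M := by
  simp only [sharpFam, conv, assoc]
  rw [← M.act_act, ← comp_whiskerRight_assoc, ← reassoc_of% hh (k M.M ≫ M.act)]

lemma isNatToTensor_flatFam {f : ∀ M : RightModule A, M.M ⟶ M.M}
    (hf : IsNatEndOnModules A f) : IsNatToTensor A (flatFam A f) := by
  intro X Y u
  have hu : (u ▷ A.X) ≫ f (freeModule A Y) = f (freeModule A X) ≫ (u ▷ A.X) :=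
    hf _ (isModuleHom_whiskerRight u)
  have hunit := isNatToTensor_convUnit A u
  simp only [flatFam, convUnit, freeModule, assoc] at hunit hu ⊢
  rw [reassoc_of% hunit, hu]

lemma flatFam_sharpFam {h : ∀ X : V, X ⟶ X ⊗ A.X} (hh : IsNatToTensor A h) :
    flatFam A (sharpFam A h) = h := by
  funext X
  have hunit := hh (convUnit A X)
  simp only [convUnit, assoc] at hunit
  simp only [flatFam, sharpFam, freeModule]
  rw [reassoc_of% hunit]
  exact (h X ≫= convUnit_whiskerRight_comp_mul X).trans (comp_id _)

lemma sharpFam_flatFam {f : ∀ M : RightModule A, M.M ⟶ M.M} (hf : IsNatEndOnModules A f) :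
    sharpFam A (flatFam A f) = f := by
  funext M
  have hact := hf _ (isModuleHom_act M)
  simp only [sharpFam, flatFam, freeModule, assoc] at hact ⊢
  rw [← hact, reassoc_of% M.act_one, Iso.inv_hom_id_assoc]

lemma eq_of_sharpFam_eq {h k : ∀ X : V, X ⟶ X ⊗ A.X} (hh : IsNatToTensor A h)
    (hk : IsNatToTensor A k) (e : sharpFam A h = sharpFam A k) : h = k := by
  rw [← flatFam_sharpFam hh, e, flatFam_sharpFam hk]

lemma conv_assoc {h k l : ∀ X : V, X ⟶ X ⊗ A.X} (hh : IsNatToTensor A h)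
    (hk : IsNatToTensor A k) (hl : IsNatToTensor A l) :
    conv A (conv A h k) l = conv A h (conv A k l) := by
  refine eq_of_sharpFam_eq (isNatToTensor_conv (isNatToTensor_conv hh hk) hl)
    (isNatToTensor_conv hh (isNatToTensor_conv hk hl)) (funext fun M => ?_)
  simp only [sharpFam_conv (isNatToTensor_conv hh hk), sharpFam_conv hh, sharpFam_conv hk, assoc]

lemma convUnit_conv {h : ∀ X : V, X ⟶ X ⊗ A.X} (hh : IsNatToTensor A h) :
    conv A (convUnit A) h = h := by
  refine eq_of_sharpFam_eq (isNatToTensor_conv (isNatToTensor_convUnit A) hh) hh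
    (funext fun M => ?_)
  rw [sharpFam_conv (isNatToTensor_convUnit A), sharpFam_convUnit, comp_id]

lemma conv_convUnit {h : ∀ X : V, X ⟶ X ⊗ A.X} (hh : IsNatToTensor A h) :
    conv A h (convUnit A) = h := by
  refine eq_of_sharpFam_eq (isNatToTensor_conv hh (isNatToTensor_convUnit A)) hh
    (funext fun M => ?_)
  rw [sharpFam_conv hh, sharpFam_convUnit, id_comp]

end

/-- `Nat(𝟭_V, 𝟭_V ⊗ H)` with the convolution product is a monoid with unit `X ↦ id_X ⊗ u`,
and `h ↦ h^♯` is an isomorphism of monoids onto the monoid `End(U_H)` of natural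
endomorphisms of the forgetful functor `U_H : V_H ⥤ V` under composition
(in `End(U_H)` the product of `f` and `g` is the composite "`f` after `g`"),
with inverse `f ↦ f^♭`. -/
theorem conv_monoid_sharp_iso :
    -- the convolution product of natural families is natural, and is associative and unital
    (∀ h k, IsNatToTensor A h → IsNatToTensor A k → IsNatToTensor A (conv A h k)) ∧
    IsNatToTensor A (convUnit A) ∧
    (∀ h k l, IsNatToTensor A h → IsNatToTensor A k → IsNatToTensor A l →
      conv A (conv A h k) l = conv A h (conv A k l)) ∧
    (∀ h, IsNatToTensor A h → conv A (convUnit A) h = h ∧ conv A h (convUnit A) = h) ∧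
    -- `(−)^♯` lands in `End(U_H)`, `(−)^♭` lands in `Nat(𝟭_V, 𝟭_V ⊗ H)`,
    -- and they are mutually inverse
    (∀ h, IsNatToTensor A h → IsNatEndOnModules A (sharpFam A h)) ∧
    (∀ f, IsNatEndOnModules A f → IsNatToTensor A (flatFam A f)) ∧
    (∀ h, IsNatToTensor A h → flatFam A (sharpFam A h) = h) ∧
    (∀ f, IsNatEndOnModules A f → sharpFam A (flatFam A f) = f) ∧
    -- `(−)^♯` is a monoid homomorphism: it sends the convolution unit to the identity
    -- natural transformation, and `(h ∗ k)^♯ = h^♯ ∘ k^♯`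
    (∀ M : RightModule A, sharpFam A (convUnit A) M = 𝟙 M.M) ∧
    (∀ h k, IsNatToTensor A h → IsNatToTensor A k →
      ∀ M : RightModule A, sharpFam A (conv A h k) M = sharpFam A k M ≫ sharpFam A h M) :=
  ⟨fun _ _ => isNatToTensor_conv, isNatToTensor_convUnit A,
    fun _ _ _ => conv_assoc, fun _ hh => ⟨convUnit_conv hh, conv_convUnit hh⟩,
    fun _ => isNatEndOnModules_sharpFam, fun _ => isNatToTensor_flatFam,
    fun _ => flatFam_sharpFam, fun _ => sharpFam_flatFam, sharpFam_convUnit,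
    fun _ _ hh _ => sharpFam_conv hh⟩
end
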